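/- arXiv:1502.04518 — 5 statements merged into one kernel-verified Lean document; each statement's English description precedes it below -/
import Mathlib

section
/- Let X, Y, W ∈ ℝ[t] with W ≠ 0, let d ∈ ℝ, set w := deg W and r := max(deg X, deg Y), and assume w ≥ r. Then the polynomial Q̃ := (W·x − X)² + (W·y − Y)² − d²·W², viewed as a polynomial in t with coefficients in ℝ[x,y], has degree exactly 2w in t, and its coefficient of t^{2w} equals (c(W,w)·x − c(X,w))² + (c(W,w)·y − c(Y,w))² − d²·c(W,w)², which is a nonzero polynomial in x, y (of degree 2). -/
/-- Lift a univariate real polynomial in `t` to a polynomial in `t` whose coefficients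
are polynomials in the two variables `x, y`. -/
noncomputable def liftT (p : Polynomial ℝ) : Polynomial (MvPolynomial (Fin 2) ℝ) :=
  p.map MvPolynomial.C

/-- `Q̃ := (W·x − X)² + (W·y − Y)² − d²·W²`, viewed as a polynomial in `t` with
coefficients in `ℝ[x,y]` (where `x = X 0`, `y = X 1`). -/
noncomputable def Qtilde (X Y W : Polynomial ℝ) (d : ℝ) :
    Polynomial (MvPolynomial (Fin 2) ℝ) :=
  (liftT W * Polynomial.C (MvPolynomial.X 0) - liftT X) ^ 2
    + (liftT W * Polynomial.C (MvPolynomial.X 1) - liftT Y) ^ 2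
    - Polynomial.C (MvPolynomial.C (d ^ 2)) * (liftT W) ^ 2

lemma liftT_natDegree (p : Polynomial ℝ) : (liftT p).natDegree = p.natDegree :=
  Polynomial.natDegree_map_eq_of_injective (MvPolynomial.C_injective _ _) p

lemma sq_td_le {p : MvPolynomial (Fin 2) ℝ} (h : p.totalDegree ≤ 1) :
    (p ^ 2).totalDegree ≤ 2 :=
  le_trans (MvPolynomial.totalDegree_pow _ _) (by omega)

lemma liftT_coeff (p : Polynomial ℝ) (n : ℕ) :
    (liftT p).coeff n = MvPolynomial.C (p.coeff n) := Polynomial.coeff_map _ _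

theorem stmt0 (X Y W : Polynomial ℝ) (hW : W ≠ 0) (d : ℝ)
    (w r : ℕ) (hw : w = W.natDegree) (hr : r = max X.natDegree Y.natDegree)
    (hwr : r ≤ w) :
    (Qtilde X Y W d).natDegree = 2 * w ∧
    (Qtilde X Y W d).coeff (2 * w) =
      (MvPolynomial.C (W.coeff w) * MvPolynomial.X 0 - MvPolynomial.C (X.coeff w)) ^ 2
        + (MvPolynomial.C (W.coeff w) * MvPolynomial.X 1 - MvPolynomial.C (Y.coeff w)) ^ 2
        - MvPolynomial.C (d ^ 2 * (W.coeff w) ^ 2) ∧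
    (Qtilde X Y W d).coeff (2 * w) ≠ 0 ∧
    ((Qtilde X Y W d).coeff (2 * w)).totalDegree = 2 := by
  have hXw : X.natDegree ≤ w := le_trans (hr ▸ le_max_left _ _) hwr
  have hYw : Y.natDegree ≤ w := le_trans (hr ▸ le_max_right _ _) hwr
  set a := W.coeff w with ha
  have ha0 : a ≠ 0 := by
    rw [ha, hw]; exact Polynomial.leadingCoeff_ne_zero.mpr hW
  -- degree bounds of the three summands
  have hA : (liftT W * Polynomial.C (MvPolynomial.X 0) - liftT X).natDegree ≤ w := by
    refine le_trans (Polynomial.natDegree_sub_le _ _) (max_le ?_ ?_)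
    · exact le_trans (Polynomial.natDegree_mul_le) (by
        simp [liftT_natDegree, hw])
    · rw [liftT_natDegree]; exact hXw
  have hB : (liftT W * Polynomial.C (MvPolynomial.X 1) - liftT Y).natDegree ≤ w := by
    refine le_trans (Polynomial.natDegree_sub_le _ _) (max_le ?_ ?_)
    · exact le_trans (Polynomial.natDegree_mul_le) (by
        simp [liftT_natDegree, hw])
    · rw [liftT_natDegree]; exact hYw
  have hWw : (liftT W).natDegree ≤ w := by rw [liftT_natDegree, hw]
  -- coefficient computation
  have hcA : (liftT W * Polynomial.C (MvPolynomial.X 0) - liftT X).coeff w =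
      MvPolynomial.C a * MvPolynomial.X 0 - MvPolynomial.C (X.coeff w) := by
    simp [Polynomial.coeff_sub, liftT_coeff, ha]
  have hcB : (liftT W * Polynomial.C (MvPolynomial.X 1) - liftT Y).coeff w =
      MvPolynomial.C a * MvPolynomial.X 1 - MvPolynomial.C (Y.coeff w) := by
    simp [Polynomial.coeff_sub, liftT_coeff, ha]
  have hcoeff : (Qtilde X Y W d).coeff (2 * w) =
      (MvPolynomial.C a * MvPolynomial.X 0 - MvPolynomial.C (X.coeff w)) ^ 2
        + (MvPolynomial.C a * MvPolynomial.X 1 - MvPolynomial.C (Y.coeff w)) ^ 2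
        - MvPolynomial.C (d ^ 2 * a ^ 2) := by
    rw [Qtilde, Polynomial.coeff_sub, Polynomial.coeff_add,
      Polynomial.coeff_pow_of_natDegree_le hA, Polynomial.coeff_pow_of_natDegree_le hB,
      Polynomial.coeff_C_mul, Polynomial.coeff_pow_of_natDegree_le hWw, hcA, hcB,
      liftT_coeff, ← ha]
    congr 1
    rw [← map_pow, ← map_mul]
  set P : MvPolynomial (Fin 2) ℝ := (MvPolynomial.C a * MvPolynomial.X 0 - MvPolynomial.C (X.coeff w)) ^ 2
        + (MvPolynomial.C a * MvPolynomial.X 1 - MvPolynomial.C (Y.coeff w)) ^ 2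
        - MvPolynomial.C (d ^ 2 * a ^ 2) with hP
  -- coefficient of x² in P is a²
  have hx2 : MvPolynomial.coeff (Finsupp.single 0 2) P = a ^ 2 := by
    rw [hP]
    have h1 : ((MvPolynomial.C a * MvPolynomial.X 0 - MvPolynomial.C (X.coeff w)) ^ 2 :
        MvPolynomial (Fin 2) ℝ) =
        MvPolynomial.C (a ^ 2) * MvPolynomial.X 0 ^ 2
          - MvPolynomial.C (2 * a * X.coeff w) * MvPolynomial.X 0
          + MvPolynomial.C (X.coeff w ^ 2) := by
      simp only [map_mul, map_pow, map_ofNat]; ring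
    have h2 : ((MvPolynomial.C a * MvPolynomial.X 1 - MvPolynomial.C (Y.coeff w)) ^ 2 :
        MvPolynomial (Fin 2) ℝ) =
        MvPolynomial.C (a ^ 2) * MvPolynomial.X 1 ^ 2
          - MvPolynomial.C (2 * a * Y.coeff w) * MvPolynomial.X 1
          + MvPolynomial.C (Y.coeff w ^ 2) := by
      simp only [map_mul, map_pow, map_ofNat]; ring
    rw [h1, h2]
    simp only [MvPolynomial.coeff_sub, MvPolynomial.coeff_add, MvPolynomial.coeff_C_mul,
      MvPolynomial.coeff_X_pow, MvPolynomial.coeff_C, MvPolynomial.coeff_X']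
    have e0 : Finsupp.single (0 : Fin 2) 2 = Finsupp.single (0 : Fin 2) 2 := rfl
    have e1 : Finsupp.single (1 : Fin 2) 2 ≠ Finsupp.single (0 : Fin 2) 2 := by
      intro h; simpa using (Finsupp.single_eq_single_iff _ _ _ _).mp h
    have e2 : Finsupp.single (0 : Fin 2) 1 ≠ Finsupp.single (0 : Fin 2) 2 := by
      intro h; simpa using (Finsupp.single_eq_single_iff _ _ _ _).mp h
    have e3 : Finsupp.single (1 : Fin 2) 1 ≠ Finsupp.single (0 : Fin 2) 2 := by
      intro h; simpa using (Finsupp.single_eq_single_iff _ _ _ _).mp h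
    have e4 : (0 : Fin 2 →₀ ℕ) ≠ Finsupp.single (0 : Fin 2) 2 := by
      intro h
      have := DFunLike.congr_fun h 0
      simp at this
    simp [if_pos e0, if_neg e1, if_neg e2, if_neg e3, if_neg e4]
  have ha2 : (a : ℝ) ^ 2 ≠ 0 := pow_ne_zero _ ha0
  have hPne : P ≠ 0 := by
    intro h
    rw [h, MvPolynomial.coeff_zero] at hx2
    exact ha2 hx2.symm
  -- total degree of P is 2
  have htd : P.totalDegree = 2 := by
    apply le_antisymm
    · rw [hP]
      refine le_trans (MvPolynomial.totalDegree_sub _ _) (max_le (le_trans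
        (MvPolynomial.totalDegree_add _ _) (max_le ?_ ?_)) ?_)
      · refine sq_td_le ?_
        refine le_trans (MvPolynomial.totalDegree_sub _ _) (max_le ?_ ?_)
        · exact le_trans (MvPolynomial.totalDegree_mul _ _) (by
            simp [MvPolynomial.totalDegree_C, MvPolynomial.totalDegree_X])
        · simp [MvPolynomial.totalDegree_C]
      · refine sq_td_le ?_
        refine le_trans (MvPolynomial.totalDegree_sub _ _) (max_le ?_ ?_)
        · exact le_trans (MvPolynomial.totalDegree_mul _ _) (by
            simp [MvPolynomial.totalDegree_C, MvPolynomial.totalDegree_X])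
        · simp [MvPolynomial.totalDegree_C]
      · rw [MvPolynomial.totalDegree_C]
        omega
    · have hmem : Finsupp.single (0 : Fin 2) 2 ∈ P.support := by
        rw [MvPolynomial.mem_support_iff, hx2]; exact ha2
      have := MvPolynomial.le_totalDegree hmem
      simpa using this
  refine ⟨?_, by rw [hcoeff], by rw [hcoeff]; exact hPne, by rw [hcoeff]; exact htd⟩
  -- natDegree of Qtilde is 2w
  apply le_antisymm
  · rw [Qtilde]
    refine le_trans (Polynomial.natDegree_sub_le _ _) (max_le (le_trans
      (Polynomial.natDegree_add_le _ _) (max_le ?_ ?_)) ?_)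
    · exact le_trans (Polynomial.natDegree_pow_le) (by omega)
    · exact le_trans (Polynomial.natDegree_pow_le) (by omega)
    · refine le_trans (Polynomial.natDegree_mul_le) ?_
      have := Polynomial.natDegree_pow_le (p := liftT W) (n := 2)
      simp only [Polynomial.natDegree_C, zero_add]
      omega
  · apply Polynomial.le_natDegree_of_ne_zero
    rw [hcoeff]; exact hPne
end

section
/- Let X, Y, W ∈ ℝ[t], let d ∈ ℝ, set w := deg W and r := max(deg X, deg Y), and assume w < r. Then the polynomial Q̃ := (W·x − X)² + (W·y − Y)² − d²·W², viewed as a polynomial in t with coefficients in ℝ[x,y], has degree exactly 2r in t, and its coefficient of t^{2r} is the constant c(X,r)² + c(Y,r)², which is a strictly positive real number; in particular the leading coefficient of Q̃ in t vanishes at no point (x₀,y₀) ∈ ℝ². -/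
lemma liftT_natDegree_le (p : Polynomial ℝ) : (liftT p).natDegree ≤ p.natDegree :=
  Polynomial.natDegree_map_le

lemma sq_coeff (X W : Polynomial ℝ) (v : MvPolynomial (Fin 2) ℝ) (r : ℕ)
    (hW : W.natDegree < r) (hX : X.natDegree ≤ r) :
    ((liftT W * Polynomial.C v - liftT X) ^ 2).coeff (2 * r) =
      MvPolynomial.C (X.coeff r ^ 2) := by
  have hA : (liftT W * Polynomial.C v).natDegree ≤ W.natDegree := by
    refine le_trans (Polynomial.natDegree_mul_le) ?_
    simp [liftT_natDegree_le W]
  have hB : (liftT X).natDegree ≤ r := le_trans (liftT_natDegree_le X) hX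
  rw [sub_sq]
  simp only [Polynomial.coeff_add, Polynomial.coeff_sub]
  have h1 : ((liftT W * Polynomial.C v) ^ 2).coeff (2 * r) = 0 := by
    apply Polynomial.coeff_eq_zero_of_natDegree_lt
    calc ((liftT W * Polynomial.C v) ^ 2).natDegree ≤ 2 * W.natDegree := by
          refine le_trans (Polynomial.natDegree_pow_le) ?_; omega
      _ < 2 * r := by omega
  have h2 : (2 * (liftT W * Polynomial.C v) * liftT X).coeff (2 * r) = 0 := by
    apply Polynomial.coeff_eq_zero_of_natDegree_lt
    calc (2 * (liftT W * Polynomial.C v) * liftT X).natDegree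
        ≤ (2 * (liftT W * Polynomial.C v)).natDegree + (liftT X).natDegree :=
          Polynomial.natDegree_mul_le
      _ ≤ (2 : Polynomial (MvPolynomial (Fin 2) ℝ)).natDegree + W.natDegree + r := by
          have := Polynomial.natDegree_mul_le (p := (2 : Polynomial (MvPolynomial (Fin 2) ℝ)))
            (q := liftT W * Polynomial.C v)
          omega
      _ < 2 * r := by simp [Polynomial.natDegree_ofNat]; omega
  have h3 : ((liftT X) ^ 2).coeff (2 * r) = MvPolynomial.C (X.coeff r ^ 2) := by
    rw [sq, two_mul, Polynomial.coeff_mul_add_eq_of_natDegree_le hB hB]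
    simp [liftT, sq]
  rw [h1, h2, h3]; ring

lemma main_coeff (X Y W : Polynomial ℝ) (d : ℝ) (r : ℕ)
    (hW : W.natDegree < r) (hr : r = max X.natDegree Y.natDegree) :
    (Qtilde X Y W d).coeff (2 * r) =
      MvPolynomial.C ((X.coeff r) ^ 2 + (Y.coeff r) ^ 2) := by
  have hX : X.natDegree ≤ r := hr ▸ le_max_left _ _
  have hY : Y.natDegree ≤ r := hr ▸ le_max_right _ _
  have hw2 : (Polynomial.C (MvPolynomial.C (d ^ 2)) * (liftT W) ^ 2).coeff (2 * r) = 0 := by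
    apply Polynomial.coeff_eq_zero_of_natDegree_lt
    calc (Polynomial.C (MvPolynomial.C (d ^ 2)) * (liftT W) ^ 2).natDegree
        ≤ (Polynomial.C (MvPolynomial.C (d ^ 2))).natDegree + ((liftT W) ^ 2).natDegree :=
          Polynomial.natDegree_mul_le
      _ ≤ 0 + 2 * W.natDegree := by
          have h := Polynomial.natDegree_pow_le (p := liftT W) (n := 2)
          have := liftT_natDegree_le W
          simp only [Polynomial.natDegree_C, add_le_add_iff_left] at *
          omega
      _ < 2 * r := by omega
  rw [Qtilde, Polynomial.coeff_sub, Polynomial.coeff_add, sq_coeff X W _ r hW hX,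
    sq_coeff Y W _ r hW hY, hw2, map_add, sub_zero]

theorem stmt1 (X Y W : Polynomial ℝ) (d : ℝ)
    (w r : ℕ) (hw : w = W.natDegree) (hr : r = max X.natDegree Y.natDegree)
    (hwr : w < r) :
    (Qtilde X Y W d).natDegree = 2 * r ∧
    (Qtilde X Y W d).coeff (2 * r) =
      MvPolynomial.C ((X.coeff r) ^ 2 + (Y.coeff r) ^ 2) ∧
    0 < (X.coeff r) ^ 2 + (Y.coeff r) ^ 2 ∧
    ∀ p : Fin 2 → ℝ, MvPolynomial.eval p ((Qtilde X Y W d).coeff (2 * r)) ≠ 0 := by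
  have hW : W.natDegree < r := hw ▸ hwr
  have hX : X.natDegree ≤ r := hr ▸ le_max_left _ _
  have hY : Y.natDegree ≤ r := hr ▸ le_max_right _ _
  have hc := main_coeff X Y W d r hW hr
  have hpos : 0 < (X.coeff r) ^ 2 + (Y.coeff r) ^ 2 := by
    have hr0 : 0 < r := by omega
    have : X.coeff r ≠ 0 ∨ Y.coeff r ≠ 0 := by
      rcases max_cases X.natDegree Y.natDegree with ⟨h1, _⟩ | ⟨h1, _⟩
      · left
        have hXne : X ≠ 0 := by
          intro h0
          have h2 := hr0
          rw [hr, h1, h0, Polynomial.natDegree_zero] at h2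
          omega
        rw [hr, h1]; exact Polynomial.leadingCoeff_ne_zero.mpr hXne
      · right
        have hYne : Y ≠ 0 := by
          intro h0
          have h2 := hr0
          rw [hr, h1, h0, Polynomial.natDegree_zero] at h2
          omega
        rw [hr, h1]; exact Polynomial.leadingCoeff_ne_zero.mpr hYne
    rcases this with h | h
    · have := sq_nonneg (Y.coeff r); have := pow_pos (abs_pos.mpr h) 2
      nlinarith [sq_abs (X.coeff r)]
    · have := sq_nonneg (X.coeff r); have := pow_pos (abs_pos.mpr h) 2
      nlinarith [sq_abs (Y.coeff r)]
  have hcne : (Qtilde X Y W d).coeff (2 * r) ≠ 0 := by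
    rw [hc, Ne, MvPolynomial.C_eq_zero]
    exact hpos.ne'
  refine ⟨?_, hc, hpos, ?_⟩
  · apply le_antisymm
    · have hle : ∀ p : Polynomial ℝ, (liftT p).natDegree ≤ p.natDegree := liftT_natDegree_le
      have hA : ∀ (P : Polynomial ℝ) (v : MvPolynomial (Fin 2) ℝ), P.natDegree ≤ r →
          ((liftT W * Polynomial.C v - liftT P) ^ 2).natDegree ≤ 2 * r := by
        intro P v hP
        refine le_trans Polynomial.natDegree_pow_le ?_
        have h1 : (liftT W * Polynomial.C v - liftT P).natDegree ≤
            max (liftT W * Polynomial.C v).natDegree (liftT P).natDegree :=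
          Polynomial.natDegree_sub_le _ _
        have h2 : (liftT W * Polynomial.C v).natDegree ≤ W.natDegree := by
          refine le_trans Polynomial.natDegree_mul_le ?_; simp [hle W]
        have h3 := le_trans (hle P) hP
        omega
      have hB : (Polynomial.C (MvPolynomial.C (d ^ 2)) * (liftT W) ^ 2).natDegree ≤ 2 * r := by
        refine le_trans Polynomial.natDegree_mul_le ?_
        have h := Polynomial.natDegree_pow_le (p := liftT W) (n := 2)
        have h2 := hle W
        simp only [Polynomial.natDegree_C, zero_add]
        omega
      refine le_trans (Polynomial.natDegree_sub_le _ _) ?_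
      refine max_le (le_trans (Polynomial.natDegree_add_le _ _) ?_) hB
      exact max_le (hA X _ hX) (hA Y _ hY)
    · exact Polynomial.le_natDegree_of_ne_zero hcne
  · intro p
    rw [hc, MvPolynomial.eval_C]
    exact hpos.ne'
end

section
/- Let X, Y, W ∈ ℝ[t], define U := X'·W − X·W' and V := Y'·W − Y·W', let d > 0, and let t₀ ∈ ℝ with W(t₀) ≠ 0 and (U(t₀), V(t₀)) ≠ (0,0). Let 𝒳(s) = X(s)/W(s) and 𝒴(s) = Y(s)/W(s) near t₀, and set (x₀, y₀) := (𝒳(t₀), 𝒴(t₀)) + (d/√(𝒳'(t₀)² + 𝒴'(t₀)²))·(𝒴'(t₀), −𝒳'(t₀)) (the exterior offset point generated by t₀). Let p ∈ ℝ[t] be the univariate polynomial p := U·(W·x₀ − X) + V·(W·y₀ − Y). Then p'(t₀) = 0 if and only if (𝒳'(t₀)·𝒴''(t₀) − 𝒳''(t₀)·𝒴'(t₀)) / (𝒳'(t₀)² + 𝒴'(t₀)²)^{3/2} = −1/d, i.e., if and only if the signed curvature of the parametrized curve (𝒳, 𝒴) at t₀ equals −1/d. -/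
/-!
Near `t₀` we have `p = W³ g` with `g = 𝒳' (x₀ - 𝒳) + 𝒴' (y₀ - 𝒴)`. The offset point lies on
the normal at `t₀`, so `g t₀ = 0` and `p'(t₀) = W(t₀)³ g'(t₀)`, where
`g'(t₀) = (d / |γ'|) (𝒳'' 𝒴' - 𝒳' 𝒴'') - |γ'|²`; this vanishes exactly when the signed
curvature `(𝒳' 𝒴'' - 𝒳'' 𝒴') / |γ'|³` equals `-1/d`.
-/

open Polynomial Filter Topology

section Curve

variable {f g : ℝ → ℝ} {t : ℝ}

/-- Minus half the derivative of the squared distance from `(a, b)` to the curve `(f, g)`. -/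
noncomputable def normalPairing (f g : ℝ → ℝ) (a b s : ℝ) : ℝ :=
  deriv f s * (a - f s) + deriv g s * (b - g s)

theorem hasDerivAt_normalPairing (a b : ℝ) (hf : DifferentiableAt ℝ f t)
    (hf' : DifferentiableAt ℝ (deriv f) t) (hg : DifferentiableAt ℝ g t)
    (hg' : DifferentiableAt ℝ (deriv g) t) :
    HasDerivAt (normalPairing f g a b)
      (deriv (deriv f) t * (a - f t) + deriv (deriv g) t * (b - g t) -
        (deriv f t ^ 2 + deriv g t ^ 2)) t := by
  have hF := hf'.hasDerivAt.mul (hf.hasDerivAt.const_sub a)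
  have hG := hg'.hasDerivAt.mul (hg.hasDerivAt.const_sub b)
  exact (hF.add hG).congr_deriv (by ring)

theorem normalPairing_offset_self (d : ℝ) :
    normalPairing f g (f t + d / √(deriv f t ^ 2 + deriv g t ^ 2) * deriv g t)
      (g t - d / √(deriv f t ^ 2 + deriv g t ^ 2) * deriv f t) t = 0 := by
  unfold normalPairing
  ring

end Curve

theorem offset_critical_iff_curvature {x₁ y₁ x₂ y₂ d : ℝ} (hd : d ≠ 0)
    (hr : 0 < x₁ ^ 2 + y₁ ^ 2) :
    x₂ * (d / √(x₁ ^ 2 + y₁ ^ 2) * y₁) + y₂ * -(d / √(x₁ ^ 2 + y₁ ^ 2) * x₁) -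
        (x₁ ^ 2 + y₁ ^ 2) = 0 ↔
      (x₁ * y₂ - x₂ * y₁) / √(x₁ ^ 2 + y₁ ^ 2) ^ 3 = -(1 / d) := by
  set r := √(x₁ ^ 2 + y₁ ^ 2)
  have hr₀ : 0 < r := Real.sqrt_pos.mpr hr
  have hr₂ : r ^ 2 = x₁ ^ 2 + y₁ ^ 2 := Real.sq_sqrt hr.le
  have hfactor : x₂ * (d / r * y₁) + y₂ * -(d / r * x₁) - (x₁ ^ 2 + y₁ ^ 2) =
      -(d * r ^ 2) * ((x₁ * y₂ - x₂ * y₁) / r ^ 3 + 1 / d) := by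
    rw [← hr₂]
    field_simp
    ring
  rw [hfactor, mul_eq_zero, or_iff_right (neg_ne_zero.mpr (mul_ne_zero hd (by positivity))),
    add_eq_zero_iff_eq_neg]

theorem hasDerivAt_of_eventuallyEq_mul_of_eq_zero {F w h : ℝ → ℝ} {t L : ℝ}
    (hF : F =ᶠ[𝓝 t] fun s => w s * h s) (hw : DifferentiableAt ℝ w t)
    (hh : HasDerivAt h L t) (h₀ : h t = 0) : HasDerivAt F (w t * L) t := by
  have := hw.hasDerivAt.mul hh
  rw [h₀, mul_zero, zero_add] at this
  exact this.congr_of_eventuallyEq hF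

section RationalFunction

variable (X W : ℝ[X]) {t : ℝ}

theorem Polynomial.hasDerivAt_eval_div_eval (hW : W.eval t ≠ 0) :
    HasDerivAt (fun s => X.eval s / W.eval s)
      ((derivative X * W - X * derivative W).eval t / W.eval t ^ 2) t := by
  simpa using (X.hasDerivAt t).fun_div (W.hasDerivAt t) hW

theorem Polynomial.deriv_eval_div_eval_eventuallyEq (hW : W.eval t ≠ 0) :
    deriv (fun s => X.eval s / W.eval s) =ᶠ[𝓝 t]
      fun s => (derivative X * W - X * derivative W).eval s / W.eval s ^ 2 := by
  filter_upwards [W.continuousAt.eventually_ne hW] with s hs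
  exact (X.hasDerivAt_eval_div_eval W hs).deriv

theorem Polynomial.differentiableAt_deriv_eval_div_eval (hW : W.eval t ≠ 0) :
    DifferentiableAt ℝ (deriv fun s => X.eval s / W.eval s) t := by
  rw [(X.deriv_eval_div_eval_eventuallyEq W hW).differentiableAt_iff]
  exact (Polynomial.differentiableAt _).div ((Polynomial.differentiableAt _).pow 2)
    (pow_ne_zero 2 hW)

end RationalFunction

theorem Polynomial.eval_wronskian_pairing_eventuallyEq (X Y W : ℝ[X]) (a b : ℝ) {t : ℝ}
    (hW : W.eval t ≠ 0) :
    (fun s => ((derivative X * W - X * derivative W) * (C a * W - X) +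
        (derivative Y * W - Y * derivative W) * (C b * W - Y)).eval s) =ᶠ[𝓝 t]
      fun s => W.eval s ^ 3 *
        normalPairing (fun s => X.eval s / W.eval s) (fun s => Y.eval s / W.eval s) a b s := by
  filter_upwards [X.deriv_eval_div_eval_eventuallyEq W hW, Y.deriv_eval_div_eval_eventuallyEq W hW,
    W.continuousAt.eventually_ne hW] with s hX hY hs
  simp only [normalPairing, hX, hY, eval_add, eval_mul, eval_sub, eval_C]
  field_simp

theorem stmt7 (X Y W U V : Polynomial ℝ)
    (hU : U = Polynomial.derivative X * W - X * Polynomial.derivative W)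
    (hV : V = Polynomial.derivative Y * W - Y * Polynomial.derivative W)
    (d : ℝ) (hd : 0 < d)
    (t₀ : ℝ) (hW : W.eval t₀ ≠ 0) (hUV : ¬(U.eval t₀ = 0 ∧ V.eval t₀ = 0))
    (𝒳 𝒴 : ℝ → ℝ)
    (h𝒳 : 𝒳 = fun s => X.eval s / W.eval s)
    (h𝒴 : 𝒴 = fun s => Y.eval s / W.eval s)
    (x₀ y₀ : ℝ)
    (hx₀ : x₀ = 𝒳 t₀ +
      d / Real.sqrt ((deriv 𝒳 t₀) ^ 2 + (deriv 𝒴 t₀) ^ 2) * deriv 𝒴 t₀)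
    (hy₀ : y₀ = 𝒴 t₀ -
      d / Real.sqrt ((deriv 𝒳 t₀) ^ 2 + (deriv 𝒴 t₀) ^ 2) * deriv 𝒳 t₀)
    (p : Polynomial ℝ)
    (hp : p = U * (Polynomial.C x₀ * W - X) + V * (Polynomial.C y₀ * W - Y)) :
    (Polynomial.derivative p).eval t₀ = 0 ↔
      (deriv 𝒳 t₀ * deriv (deriv 𝒴) t₀ - deriv (deriv 𝒳) t₀ * deriv 𝒴 t₀) /
        (Real.sqrt ((deriv 𝒳 t₀) ^ 2 + (deriv 𝒴 t₀) ^ 2)) ^ 3 = -(1 / d) := by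
  subst h𝒳 h𝒴 hU hV hp
  have hX := X.hasDerivAt_eval_div_eval W hW
  have hY := Y.hasDerivAt_eval_div_eval W hW
  have hspeed : 0 < deriv (fun s => X.eval s / W.eval s) t₀ ^ 2 +
      deriv (fun s => Y.eval s / W.eval s) t₀ ^ 2 := by
    rw [hX.deriv, hY.deriv]
    rcases not_and_or.mp hUV with h | h <;> positivity
  have hpair := hasDerivAt_normalPairing x₀ y₀ hX.differentiableAt
    (X.differentiableAt_deriv_eval_div_eval W hW) hY.differentiableAt
    (Y.differentiableAt_deriv_eval_div_eval W hW)
  have hp := hasDerivAt_of_eventuallyEq_mul_of_eq_zero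
    (X.eval_wronskian_pairing_eventuallyEq Y W x₀ y₀ hW) (W.differentiableAt.pow 3) hpair
    (by rw [hx₀, hy₀]; exact normalPairing_offset_self d)
  rw [(Polynomial.hasDerivAt _ t₀).unique hp, mul_eq_zero, or_iff_right (pow_ne_zero 3 hW),
    hx₀, hy₀, add_sub_cancel_left, sub_sub_cancel_left]
  exact offset_critical_iff_curvature hd.ne' hspeed
end

section
/- Let X, Y, W ∈ ℝ[t] with W ≠ 0, define U := X'·W − X·W' and V := Y'·W − Y·W', and assume (U,V) ≠ (0,0). Let ν := gcd(U,V), Û := U/ν, V̂ := V/ν. Let t₀ ∈ ℝ with W(t₀) ≠ 0, and let 𝒳(s) = X(s)/W(s), 𝒴(s) = Y(s)/W(s) near t₀. Then 𝒳'(t₀)·𝒴''(t₀) − 𝒳''(t₀)·𝒴'(t₀) = ν(t₀)²·( Û(t₀)·V̂'(t₀) − Û'(t₀)·V̂(t₀) ) / W(t₀)⁴. -/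
open Polynomial

lemma quot_hasDerivAt (P Q : Polynomial ℝ) (s : ℝ) (hQ : Q.eval s ≠ 0) :
    HasDerivAt (fun x => P.eval x / Q.eval x)
      (((derivative P).eval s * Q.eval s - P.eval s * (derivative Q).eval s) / (Q.eval s) ^ 2) s :=
  (P.hasDerivAt s).div (Q.hasDerivAt s) hQ

lemma second_deriv_quot (X W : Polynomial ℝ) (U : Polynomial ℝ)
    (hU : U = derivative X * W - X * derivative W)
    (𝒳 : ℝ → ℝ) (h𝒳 : 𝒳 = fun s => X.eval s / W.eval s)
    (t₀ : ℝ) (hW : W.eval t₀ ≠ 0) :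
    deriv 𝒳 t₀ = U.eval t₀ / (W.eval t₀) ^ 2 ∧
    deriv (deriv 𝒳) t₀ =
      ((derivative U).eval t₀ * (W.eval t₀) ^ 2 -
        U.eval t₀ * (2 * W.eval t₀ * (derivative W).eval t₀)) / (W.eval t₀) ^ 4 := by
  have hD1 : ∀ s : ℝ, W.eval s ≠ 0 → HasDerivAt 𝒳 (U.eval s / (W.eval s) ^ 2) s := by
    intro s hs
    have h := quot_hasDerivAt X W s hs
    rw [h𝒳]
    convert h using 1
    rw [hU]; simp
  have hmem : ∀ᶠ s in nhds t₀, W.eval s ≠ 0 :=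
    (W.continuous.continuousAt (x := t₀)).eventually_ne hW
  have e1 : deriv 𝒳 =ᶠ[nhds t₀] fun s => U.eval s / (W.eval s) ^ 2 :=
    hmem.mono fun s hs => (hD1 s hs).deriv
  constructor
  · exact (hD1 t₀ hW).deriv
  · rw [Filter.EventuallyEq.deriv_eq e1]
    have h2 : HasDerivAt (fun s => U.eval s / (W.eval s) ^ 2)
        (((derivative U).eval t₀ * ((W ^ 2).eval t₀) -
          U.eval t₀ * ((derivative (W ^ 2)).eval t₀)) / ((W ^ 2).eval t₀) ^ 2) t₀ := by
      have := quot_hasDerivAt U (W ^ 2) t₀ (by simp [pow_ne_zero, hW])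
      simpa using this
    rw [h2.deriv]
    simp [derivative_pow, Polynomial.eval_pow]
    ring

theorem stmt11 (X Y W U V ν Uh Vh : Polynomial ℝ) (hWne : W ≠ 0)
    (hU : U = Polynomial.derivative X * W - X * Polynomial.derivative W)
    (hV : V = Polynomial.derivative Y * W - Y * Polynomial.derivative W)
    (hUV : ¬(U = 0 ∧ V = 0))
    (hν : ν = gcd U V) (hUh : U = ν * Uh) (hVh : V = ν * Vh)
    (t₀ : ℝ) (hW : W.eval t₀ ≠ 0)
    (𝒳 𝒴 : ℝ → ℝ)
    (h𝒳 : 𝒳 = fun s => X.eval s / W.eval s)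
    (h𝒴 : 𝒴 = fun s => Y.eval s / W.eval s) :
    deriv 𝒳 t₀ * deriv (deriv 𝒴) t₀ - deriv (deriv 𝒳) t₀ * deriv 𝒴 t₀ =
      (ν.eval t₀) ^ 2 *
        (Uh.eval t₀ * (Polynomial.derivative Vh).eval t₀ -
          (Polynomial.derivative Uh).eval t₀ * Vh.eval t₀) / (W.eval t₀) ^ 4 := by
  obtain ⟨hX1, hX2⟩ := second_deriv_quot X W U hU 𝒳 h𝒳 t₀ hW
  obtain ⟨hY1, hY2⟩ := second_deriv_quot Y W V hV 𝒴 h𝒴 t₀ hW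
  have key : U * derivative V - derivative U * V =
      ν ^ 2 * (Uh * derivative Vh - derivative Uh * Vh) := by
    rw [hUh, hVh]; simp only [derivative_mul]; ring
  have keyeval : U.eval t₀ * (derivative V).eval t₀ - (derivative U).eval t₀ * V.eval t₀ =
      (ν.eval t₀) ^ 2 * (Uh.eval t₀ * (derivative Vh).eval t₀ -
        (derivative Uh).eval t₀ * Vh.eval t₀) := by
    have := congrArg (Polynomial.eval t₀) key
    simpa using this
  rw [hX1, hX2, hY1, hY2, ← keyeval]
  field_simp
  ring
end

section
/- Let X, Y, W ∈ ℝ[t] with W ≠ 0, define U := X'·W − X·W' and V := Y'·W − Y·W', and assume (U,V) ≠ (0,0). Let ν := gcd(U,V), Û := U/ν, V̂ := V/ν. Let d > 0 and let t₀ ∈ ℝ satisfy W(t₀) ≠ 0 and U(t₀) = V(t₀) = 0. Let α₀ ∈ ℝ with α₀² = Û(t₀)² + V̂(t₀)² and α₀ ≠ 0, and set x₀ := X(t₀)/W(t₀) + d·V̂(t₀)/α₀ and y₀ := Y(t₀)/W(t₀) − d·Û(t₀)/α₀ (the offset point generated by t₀). Define the univariate polynomial P̂ := Û·(W·x₀ −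 X) + V̂·(W·y₀ − Y) ∈ ℝ[t]. Then P̂(t₀) = 0, and t₀ is a root of P̂ of multiplicity at least 2 (i.e., P̂'(t₀) = 0) if and only if Û(t₀)·V̂'(t₀) − V̂(t₀)·Û'(t₀) = 0. -/
/-!
At a parameter `t₀` with `W(t₀) ≠ 0` and `U(t₀) = V(t₀) = 0` we have `X'(t₀) = X(t₀) W'(t₀) / W(t₀)`
(and likewise for `Y`), so the factor `x₀ W - X` of `P̂` and its derivative evaluate at `t₀` to the
offset `d V̂(t₀) / α₀` times `W(t₀)` and `W'(t₀)` respectively (and `y₀ W - Y` to `-d Û(t₀) / α₀`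
times the same). The contributions of `Û` and `V̂` then cancel in `P̂(t₀)` and in the `W'` part of
`P̂'(t₀)`, leaving `P̂'(t₀) = -(d W(t₀) / α₀) (Û V̂' - V̂ Û')(t₀)`.
-/

open Polynomial

namespace Polynomial

variable {K : Type*} [Field K]

/-- For `(A, B)` proportional to the tangent of the curve `(f/w, g/w)`, its zeros off those of `w`
are the parameters whose normal line passes through `(x, y)`. -/
noncomputable def footpointPoly (A B f g w : K[X]) (x y : K) : K[X] :=
  A * (C x * w - f) + B * (C y * w - g)

lemma eval_C_mul_sub_of_eq_div_add {f w : K[X]} {t x e : K} (hw : w.eval t ≠ 0)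
    (hx : x = f.eval t / w.eval t + e) :
    (C x * w - f).eval t = e * w.eval t := by
  subst hx
  simp only [eval_sub, eval_mul, eval_C]
  field_simp
  ring

lemma eval_derivative_C_mul_sub_of_eq_div_add {f w : K[X]} {t x e : K} (hw : w.eval t ≠ 0)
    (hfw : (derivative f * w - f * derivative w).eval t = 0)
    (hx : x = f.eval t / w.eval t + e) :
    (derivative (C x * w - f)).eval t = e * (derivative w).eval t := by
  subst hx
  simp only [eval_sub, eval_mul] at hfw
  simp only [derivative_sub, derivative_C_mul, eval_sub, eval_mul, eval_C]
  field_simp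
  linear_combination -hfw

variable {A B f g w : K[X]} {t c x y : K}

lemma eval_footpointPoly_eq_zero (hw : w.eval t ≠ 0)
    (hx : x = f.eval t / w.eval t + c * B.eval t)
    (hy : y = g.eval t / w.eval t + -(c * A.eval t)) :
    (footpointPoly A B f g w x y).eval t = 0 := by
  simp only [footpointPoly, eval_add, eval_mul, eval_C_mul_sub_of_eq_div_add hw hx,
    eval_C_mul_sub_of_eq_div_add hw hy]
  ring

lemma eval_derivative_footpointPoly (hw : w.eval t ≠ 0)
    (hfw : (derivative f * w - f * derivative w).eval t = 0)
    (hgw : (derivative g * w - g * derivative w).eval t = 0)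
    (hx : x = f.eval t / w.eval t + c * B.eval t)
    (hy : y = g.eval t / w.eval t + -(c * A.eval t)) :
    (derivative (footpointPoly A B f g w x y)).eval t =
      -(c * w.eval t) * (A.eval t * (derivative B).eval t - B.eval t * (derivative A).eval t) := by
  simp only [footpointPoly, derivative_add, derivative_mul, eval_add, eval_mul,
    eval_C_mul_sub_of_eq_div_add hw hx, eval_C_mul_sub_of_eq_div_add hw hy,
    eval_derivative_C_mul_sub_of_eq_div_add hw hfw hx,
    eval_derivative_C_mul_sub_of_eq_div_add hw hgw hy]
  ring

end Polynomial

theorem stmt12_general (X Y W U V Uh Vh : Polynomial ℝ)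
    (hU : U = Polynomial.derivative X * W - X * Polynomial.derivative W)
    (hV : V = Polynomial.derivative Y * W - Y * Polynomial.derivative W)
    (d : ℝ) (hd : 0 < d)
    (t₀ : ℝ) (hWt : W.eval t₀ ≠ 0) (hUt : U.eval t₀ = 0) (hVt : V.eval t₀ = 0)
    (α₀ : ℝ) (hα0 : α₀ ≠ 0)
    (x₀ y₀ : ℝ)
    (hx₀ : x₀ = X.eval t₀ / W.eval t₀ + d * Vh.eval t₀ / α₀)
    (hy₀ : y₀ = Y.eval t₀ / W.eval t₀ - d * Uh.eval t₀ / α₀)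
    (Phat : Polynomial ℝ)
    (hPhat : Phat = Uh * (Polynomial.C x₀ * W - X) + Vh * (Polynomial.C y₀ * W - Y)) :
    Phat.eval t₀ = 0 ∧
    ((Polynomial.derivative Phat).eval t₀ = 0 ↔
      Uh.eval t₀ * (Polynomial.derivative Vh).eval t₀ -
        Vh.eval t₀ * (Polynomial.derivative Uh).eval t₀ = 0) := by
  have hPhat' : Phat = footpointPoly Uh Vh X Y W x₀ y₀ := hPhat
  have hx : x₀ = X.eval t₀ / W.eval t₀ + d / α₀ * Vh.eval t₀ := by
    rw [hx₀, mul_div_right_comm]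
  have hy : y₀ = Y.eval t₀ / W.eval t₀ + -(d / α₀ * Uh.eval t₀) := by
    rw [hy₀, mul_div_right_comm, sub_eq_add_neg]
  have hscale : -(d / α₀ * W.eval t₀) ≠ 0 :=
    neg_ne_zero.mpr (mul_ne_zero (div_ne_zero hd.ne' hα0) hWt)
  rw [hPhat']
  refine ⟨eval_footpointPoly_eq_zero hWt hx hy, ?_⟩
  rw [eval_derivative_footpointPoly hWt (hU ▸ hUt) (hV ▸ hVt) hx hy, mul_eq_zero_iff_left hscale]

theorem stmt12 (X Y W U V ν Uh Vh : Polynomial ℝ) (hWne : W ≠ 0)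
    (hU : U = Polynomial.derivative X * W - X * Polynomial.derivative W)
    (hV : V = Polynomial.derivative Y * W - Y * Polynomial.derivative W)
    (hUV : ¬(U = 0 ∧ V = 0))
    (hν : ν = gcd U V) (hUh : U = ν * Uh) (hVh : V = ν * Vh)
    (d : ℝ) (hd : 0 < d)
    (t₀ : ℝ) (hWt : W.eval t₀ ≠ 0) (hUt : U.eval t₀ = 0) (hVt : V.eval t₀ = 0)
    (α₀ : ℝ) (hα : α₀ ^ 2 = (Uh.eval t₀) ^ 2 + (Vh.eval t₀) ^ 2) (hα0 : α₀ ≠ 0)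
    (x₀ y₀ : ℝ)
    (hx₀ : x₀ = X.eval t₀ / W.eval t₀ + d * Vh.eval t₀ / α₀)
    (hy₀ : y₀ = Y.eval t₀ / W.eval t₀ - d * Uh.eval t₀ / α₀)
    (Phat : Polynomial ℝ)
    (hPhat : Phat = Uh * (Polynomial.C x₀ * W - X) + Vh * (Polynomial.C y₀ * W - Y)) :
    Phat.eval t₀ = 0 ∧
    ((Polynomial.derivative Phat).eval t₀ = 0 ↔
      Uh.eval t₀ * (Polynomial.derivative Vh).eval t₀ -
        Vh.eval t₀ * (Polynomial.derivative Uh).eval t₀ = 0) :=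
  stmt12_general X Y W U V Uh Vh hU hV d hd t₀ hWt hUt hVt α₀ hα0 x₀ y₀ hx₀ hy₀ Phat hPhat
end
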